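/- Let d ≥ 1 be an integer, γ ∈ (1/2,(d+2)/4), and T ∈ (0,∞]. Suppose ψ : (ℝ^d \ {0}) × [0,∞) → [0,∞] is measurable, satisfies the normalized Fourier Montgomery–Smith equation ψ(ξ,t) = e^{−t|ξ|^{2γ}} ψ(ξ,0) + ∫_0^t e^{−s|ξ|^{2γ}} |ξ|^{2γ} ∫_{ℝ^d} ψ(η,t−s) ψ(ξ−η,t−s) H(η|ξ) dη ds for all ξ ≠ 0 and t ≥ 0, and ψ(ξ,t) < ∞ for Lebesgue-almost every (ξ,t) ∈ ℝ^d × (0,T). Then there exists a measurable set D ⊆ ℝ^d whose complement is Lebesgue-null such that ψ(ξ,t) < ∞ for every ξ ∈ D and every t ∈ [0,T). -/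

import Mathlib

/-!
Multiplying the equation by `e^{t|ξ|^{2γ}}` and substituting `s ↦ t - s` writes
`e^{t|ξ|^{2γ}} ψ(ξ,t)` as `ψ(ξ,0)` plus an integral over `(0,t]` of a nonnegative integrand that
does not depend on `t`; hence it is nondecreasing in `t`, and finiteness of `ψ(ξ,·)` at a time `u`
propagates to all of `[0,u]`. By Fubini, for almost every `u ∈ (0,T)` the set
`{ξ | ψ(ξ,u) = ∞}` is null, so above each of the countably many rationals `q < T` there is such a
good time; away from the union of the corresponding null sets and the origin, `ψ(ξ,·)` is finite
on all of `[0,T)`.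
-/

open MeasureTheory Set ENNReal

/-- The constant `c_{d,γ}` of the standard majorizing kernel. -/
noncomputable def cdg (d : ℕ) (γ : ℝ) : ℝ :=
  Real.pi ^ (-(d : ℝ)/2) * Real.Gamma (2*γ - 1) * (Real.Gamma (((d : ℝ) + 1 - 2*γ)/2))^2 /
    (Real.Gamma (((d : ℝ) + 2 - 4*γ)/2) * (Real.Gamma ((2*γ - 1)/2))^2)

/-- `H(η|ξ) = c_{d,γ} |η|^{2γ−d−1} |ξ−η|^{2γ−d−1} |ξ|^{d+2−4γ}`. -/
noncomputable def Hker (d : ℕ) (γ : ℝ) (η ξ : EuclideanSpace ℝ (Fin d)) : ℝ :=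
  cdg d γ * ‖η‖ ^ (2*γ - (d : ℝ) - 1) * ‖ξ - η‖ ^ (2*γ - (d : ℝ) - 1)
    * ‖ξ‖ ^ ((d : ℝ) + 2 - 4*γ)

lemma setLIntegral_Ioc_comp_const_sub (t : ℝ) (f : ℝ → ℝ≥0∞) :
    ∫⁻ s in Ioc 0 t, f (t - s) = ∫⁻ s in Ioc 0 t, f s := by
  rw [(Measure.measurePreserving_sub_left volume t).setLIntegral_comp_emb
    (Homeomorph.subLeft t).measurableEmbedding f (Ioc 0 t), image_const_sub_Ioc,
    sub_self, sub_zero]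
  exact setLIntegral_congr Ico_ae_eq_Ioc

/-- Mild form of `φ' = c (F - φ)`. -/
def DuhamelFormula (c : ℝ) (F φ : ℝ → ℝ≥0∞) : Prop :=
  ∀ t, 0 ≤ t → φ t = ENNReal.ofReal (Real.exp (-t * c)) * φ 0 +
    ∫⁻ s in Ioc 0 t, ENNReal.ofReal (Real.exp (-s * c) * c) * F (t - s)

namespace DuhamelFormula

variable {c : ℝ} {F φ : ℝ → ℝ≥0∞}

lemma exp_mul_eq (h : DuhamelFormula c F φ) {t : ℝ} (ht : 0 ≤ t) :
    ENNReal.ofReal (Real.exp (t * c)) * φ t =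
      φ 0 + ∫⁻ s in Ioc 0 t, ENNReal.ofReal (Real.exp (s * c) * c) * F s := by
  rw [h t ht, mul_add, ← mul_assoc, ← ENNReal.ofReal_mul (Real.exp_pos _).le, ← Real.exp_add,
    neg_mul, add_neg_cancel, Real.exp_zero, ENNReal.ofReal_one, one_mul,
    ← lintegral_const_mul' _ _ ENNReal.ofReal_ne_top,
    ← setLIntegral_Ioc_comp_const_sub t]
  congr 1
  refine lintegral_congr fun s ↦ ?_
  rw [← mul_assoc, ← ENNReal.ofReal_mul (Real.exp_pos _).le, ← mul_assoc, ← Real.exp_add]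
  ring_nf

lemma monotoneOn_exp_mul (h : DuhamelFormula c F φ) :
    MonotoneOn (fun t ↦ ENNReal.ofReal (Real.exp (t * c)) * φ t) (Ici 0) := by
  intro t₁ ht₁ t₂ ht₂ h₁₂
  simp only [h.exp_mul_eq ht₁, h.exp_mul_eq ht₂]
  gcongr

lemma lt_top_of_lt_top_of_le (h : DuhamelFormula c F φ)
    {t₁ t₂ : ℝ} (ht₁ : 0 ≤ t₁) (h₁₂ : t₁ ≤ t₂) (hφ : φ t₂ < ⊤) : φ t₁ < ⊤ := by
  refine ENNReal.lt_top_of_mul_ne_top_right ?_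
    (ENNReal.ofReal_pos.mpr (Real.exp_pos (t₁ * c))).ne'
  refine ne_top_of_le_ne_top ?_ (h.monotoneOn_exp_mul ht₁ (ht₁.trans h₁₂) h₁₂)
  exact ENNReal.mul_ne_top ENNReal.ofReal_ne_top hφ.ne

end DuhamelFormula

lemma exists_gt_ae_lt_top_of_ae_prod {E : Type*} [MeasurableSpace E] {μ : Measure E}
    [SFinite μ] {ψ : E → ℝ → ℝ≥0∞} (hψ : Measurable (Function.uncurry ψ)) {T : ℝ≥0∞}
    (hfin : ∀ᵐ p ∂μ.prod volume, 0 < p.2 → ENNReal.ofReal p.2 < T → ψ p.1 p.2 < ⊤)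
    {a : ℝ} (haT : ENNReal.ofReal a < T) :
    ∃ u, a < u ∧ ∀ᵐ ξ ∂μ, ψ ξ u < ⊤ := by
  obtain ⟨r, -, har, hrT⟩ := ENNReal.lt_iff_exists_real_btwn.mp haT
  obtain ⟨har, hr⟩ := ENNReal.ofReal_lt_ofReal_iff'.mp har
  have hslices : ∀ᵐ t, 0 < t → ENNReal.ofReal t < T → ∀ᵐ ξ ∂μ, ψ ξ t < ⊤ := by
    have hmeas : MeasurableSet {p : E × ℝ | 0 < p.2 → ENNReal.ofReal p.2 < T → ψ p.1 p.2 < ⊤} :=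
      (measurableSet_lt measurable_const measurable_snd).imp <|
        (measurableSet_lt (ENNReal.measurable_ofReal.comp measurable_snd) measurable_const).imp <|
          measurableSet_lt hψ measurable_const
    filter_upwards [(Measure.ae_ae_comm hmeas).mp ((Measure.ae_prod_iff_ae_ae hmeas).mp hfin)]
      with t ht ht₀ htT
    filter_upwards [ht] with ξ hξ using hξ ht₀ htT
  have hne : (ae (volume.restrict (Ioo (max a 0) r))).NeBot := by
    rw [ae_restrict_neBot, Real.volume_Ioo]
    simpa using max_lt har hr
  obtain ⟨u, hu, hgood⟩ := ((ae_restrict_mem (measurableSet_Ioo (a := max a 0) (b := r))).and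
    (ae_restrict_of_ae hslices)).exists
  refine ⟨u, (le_max_left a 0).trans_lt hu.1, hgood ((le_max_right a 0).trans_lt hu.1) ?_⟩
  exact (ENNReal.ofReal_le_ofReal hu.2.le).trans_lt hrT

lemma ae_forall_lt_top_of_ae_prod {E : Type*} [MeasurableSpace E] {μ : Measure E}
    [SFinite μ] {ψ : E → ℝ → ℝ≥0∞} (hψ : Measurable (Function.uncurry ψ)) {T : ℝ≥0∞}
    (hfin : ∀ᵐ p ∂μ.prod volume, 0 < p.2 → ENNReal.ofReal p.2 < T → ψ p.1 p.2 < ⊤)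
    (hback : ∀ᵐ ξ ∂μ, ∀ t₁ t₂, 0 ≤ t₁ → t₁ ≤ t₂ → ψ ξ t₂ < ⊤ → ψ ξ t₁ < ⊤) :
    ∀ᵐ ξ ∂μ, ∀ t, 0 ≤ t → ENNReal.ofReal t < T → ψ ξ t < ⊤ := by
  choose u hu using fun q : {q : ℚ // ENNReal.ofReal q < T} ↦
    exists_gt_ae_lt_top_of_ae_prod hψ hfin q.2
  filter_upwards [hback, ae_all_iff.mpr fun q ↦ (hu q).2] with ξ hback hgood t ht htT
  obtain ⟨r, -, htr, hrT⟩ := ENNReal.lt_iff_exists_real_btwn.mp htT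
  obtain ⟨q, htq, hqr⟩ := exists_rat_btwn (ENNReal.ofReal_lt_ofReal_iff'.mp htr).1
  have hqT : ENNReal.ofReal q < T := (ENNReal.ofReal_le_ofReal hqr.le).trans_lt hrT
  exact hback t _ ht (htq.trans (hu ⟨q, hqT⟩).1).le (hgood _)

theorem stmt12_general (d : ℕ) (hd : 1 ≤ d) (γ : ℝ)
    (T : ℝ≥0∞)
    (ψ : EuclideanSpace ℝ (Fin d) → ℝ → ℝ≥0∞)
    (hmeas : Measurable (Function.uncurry ψ))
    (heq : ∀ ξ : EuclideanSpace ℝ (Fin d), ξ ≠ 0 → ∀ t : ℝ, 0 ≤ t →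
      ψ ξ t = ENNReal.ofReal (Real.exp (-t * ‖ξ‖ ^ (2*γ))) * ψ ξ 0 +
        ∫⁻ s in Set.Ioc (0:ℝ) t,
          ENNReal.ofReal (Real.exp (-s * ‖ξ‖ ^ (2*γ)) * ‖ξ‖ ^ (2*γ)) *
            ∫⁻ η, ψ η (t - s) * ψ (ξ - η) (t - s) * ENNReal.ofReal (Hker d γ η ξ))
    (hfin : ∀ᵐ p : EuclideanSpace ℝ (Fin d) × ℝ ∂(volume : Measure (EuclideanSpace ℝ (Fin d) × ℝ)),
      0 < p.2 → ENNReal.ofReal p.2 < T → ψ p.1 p.2 < ⊤) :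
    ∃ D : Set (EuclideanSpace ℝ (Fin d)), MeasurableSet D ∧ volume Dᶜ = 0 ∧
      ∀ ξ ∈ D, ∀ t : ℝ, 0 ≤ t → ENNReal.ofReal t < T → ψ ξ t < ⊤ := by
  have : Nonempty (Fin d) := ⟨⟨0, hd⟩⟩
  have hback : ∀ᵐ ξ, ∀ t₁ t₂, 0 ≤ t₁ → t₁ ≤ t₂ → ψ ξ t₂ < ⊤ → ψ ξ t₁ < ⊤ := by
    filter_upwards [Measure.ae_ne volume 0] with ξ hξ t₁ t₂ ht₁ h₁₂
    exact DuhamelFormula.lt_top_of_lt_top_of_le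
      (F := fun u ↦ ∫⁻ η, ψ η u * ψ (ξ - η) u * ENNReal.ofReal (Hker d γ η ξ)) (heq ξ hξ) ht₁ h₁₂
  rw [Measure.volume_eq_prod] at hfin
  obtain ⟨N, hN, hNmeas, hNnull⟩ :=
    exists_measurable_superset_of_null (ae_iff.mp (ae_forall_lt_top_of_ae_prod hmeas hfin hback))
  exact ⟨Nᶜ, hNmeas.compl, by rwa [compl_compl], fun ξ hξ ↦ not_not.mp (mt (@hN ξ) hξ)⟩

theorem stmt12 (d : ℕ) (hd : 1 ≤ d) (γ : ℝ)
    (hγ : γ ∈ Set.Ioo (1/2 : ℝ) (((d : ℝ) + 2)/4))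
    (T : ℝ≥0∞) (hT : 0 < T)
    (ψ : EuclideanSpace ℝ (Fin d) → ℝ → ℝ≥0∞)
    (hmeas : Measurable (Function.uncurry ψ))
    (heq : ∀ ξ : EuclideanSpace ℝ (Fin d), ξ ≠ 0 → ∀ t : ℝ, 0 ≤ t →
      ψ ξ t = ENNReal.ofReal (Real.exp (-t * ‖ξ‖ ^ (2*γ))) * ψ ξ 0 +
        ∫⁻ s in Set.Ioc (0:ℝ) t,
          ENNReal.ofReal (Real.exp (-s * ‖ξ‖ ^ (2*γ)) * ‖ξ‖ ^ (2*γ)) *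
            ∫⁻ η, ψ η (t - s) * ψ (ξ - η) (t - s) * ENNReal.ofReal (Hker d γ η ξ))
    (hfin : ∀ᵐ p : EuclideanSpace ℝ (Fin d) × ℝ ∂(volume : Measure (EuclideanSpace ℝ (Fin d) × ℝ)),
      0 < p.2 → ENNReal.ofReal p.2 < T → ψ p.1 p.2 < ⊤) :
    ∃ D : Set (EuclideanSpace ℝ (Fin d)), MeasurableSet D ∧ volume Dᶜ = 0 ∧
      ∀ ξ ∈ D, ∀ t : ℝ, 0 ≤ t → ENNReal.ofReal t < T → ψ ξ t < ⊤ :=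
  stmt12_general d hd γ T ψ hmeas heq hfin
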